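/- Let α ∈ (1/3, 1), let x, y : [0,2] → ℝ be α-Hölder, let A be an α-Lévy area of order 0 associated with γ = (x, y), and let f : ℝ → ℝ be of class C². Then the family I_ε^{[0,1]}(f), ε ∈ (0,1], converges as ε ↓ 0; that is, the corrected symmetric integral ∫_0^1 f(y(u)) d^{A,1}x(u) exists. -/

import Mathlib

open MeasureTheory Filter Set

/-- `z` is `α`-Hölder on the interval `[a, b]`. -/
def HolderOnIcc (α a b : ℝ) (z : ℝ → ℝ) : Prop :=
  ∃ L > 0, ∀ s ∈ Set.Icc a b, ∀ t ∈ Set.Icc a b, |z t - z s| ≤ L * |t - s| ^ α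

/-- `A` is an `α`-Lévy area of order 0 associated with `γ = (x, y)` on `[0, 2]`. -/
def IsLevyArea0 (α : ℝ) (x y : ℝ → ℝ) (A : ℝ → ℝ → ℝ) : Prop :=
  (∀ r ∈ Set.Icc (0:ℝ) 2, ∀ s ∈ Set.Icc (0:ℝ) 2, ∀ t ∈ Set.Icc (0:ℝ) 2,
    A r s + A s t + A t r
      = -(1/2) * ((y t - y s) * (x r - x s) - (y r - y s) * (x t - x s)))
  ∧ ∃ C > 0, ∀ s ∈ Set.Icc (0:ℝ) 2, ∀ t ∈ Set.Icc (0:ℝ) 2,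
      |A s t| ≤ C * |t - s| ^ (2 * α)

/-- The `ε`-approximation `I_ε^{[a,b]}(f)` of the corrected symmetric integral. -/
noncomputable def Ieps (x y : ℝ → ℝ) (A : ℝ → ℝ → ℝ) (f : ℝ → ℝ) (a b ε : ℝ) : ℝ :=
  ε⁻¹ * (∫ u in a..b, ((f (y u) + f (y (u + ε))) / 2) * (x (u + ε) - x u))
    + ε⁻¹ * (∫ u in a..b, deriv f (y u) * A u (u + ε))

/-!
Put `g s t = (f (y s) + f (y t)) / 2 * (x t - x s) + f' (y s) * A s t`, so that
`I_ε = ε⁻¹ ∫₀¹ g u (u + ε) du`. Chen's relation for `A` turns `g a c - g a b - g b c` into a sum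
of second-order Taylor remainders of `f` times increments of `x`, plus `(f' (y a) - f' (y b)) A b c`;
each is `O((c - a) ^ (3α))` and `3α > 1`. The sewing lemma then gives a continuous `Φ` with
`|Φ t - Φ s - g s t| ≤ K (t - s) ^ (3α)`, obtained as the limit of Riemann sums of `g` along
uniform partitions. Hence `I_ε` differs by `O(ε ^ (3α - 1))` from
`ε⁻¹ ∫₀¹ (Φ (u + ε) - Φ u) du`, which tends to `Φ 1 - Φ 0` by the fundamental theorem of calculus.
-/

open Topology

lemma Finset.sum_range_mul {M : Type*} [AddCommMonoid M] (h : ℕ → M) (N K : ℕ) :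
    ∑ n ∈ Finset.range (N * K), h n
      = ∑ i ∈ Finset.range N, ∑ j ∈ Finset.range K, h (i * K + j) := by
  induction N with
  | zero => simp
  | succ N ih => rw [Nat.succ_mul, Finset.sum_range_add, ih, Finset.sum_range_succ]

lemma rpow_add_rpow_le {u v θ β : ℝ} (hu : 0 ≤ u) (hv : 0 ≤ v) (hθ : 0 ≤ θ)
    (huθ : u ≤ θ * (u + v)) (hvθ : v ≤ θ * (u + v)) (hβ : 1 ≤ β) :
    u ^ β + v ^ β ≤ θ ^ (β - 1) * (u + v) ^ β := by
  have hsplit : ∀ z : ℝ, 0 ≤ z → z ^ β = z * z ^ (β - 1) := fun z hz => by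
    rw [← Real.rpow_one_add' hz (by linarith), add_sub_cancel]
  calc u ^ β + v ^ β = u * u ^ (β - 1) + v * v ^ (β - 1) := by rw [hsplit u hu, hsplit v hv]
    _ ≤ u * (θ * (u + v)) ^ (β - 1) + v * (θ * (u + v)) ^ (β - 1) := by
      gcongr
    _ = θ ^ (β - 1) * (u + v) ^ β := by
      rw [Real.mul_rpow hθ (by positivity), hsplit (u + v) (by positivity)]
      ring

lemma add_mul_div_mem_Icc {a b : ℝ} (hab : a ≤ b) {i N : ℕ} (hi : i ≤ N) :
    a + i * (b - a) / N ∈ Icc a b := by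
  have h0 : (0 : ℝ) ≤ i / N := by positivity
  have h1 : (i : ℝ) / N ≤ 1 := div_le_one_of_le₀ (by exact_mod_cast hi) (Nat.cast_nonneg N)
  rw [mul_comm, mul_div_assoc, mul_comm]
  constructor <;> nlinarith

lemma tendsto_natCast_rpow_atTop_zero {γ : ℝ} (hγ : γ < 0) :
    Tendsto (fun N : ℕ => (N : ℝ) ^ γ) atTop (𝓝 0) := by
  have h := (tendsto_rpow_neg_atTop (neg_pos.2 hγ)).comp tendsto_natCast_atTop_atTop
  rw [neg_neg] at h
  exact h

lemma tendsto_abs_sub_rpow_nhds_zero {γ : ℝ} (hγ : 0 < γ) (s : ℝ) :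
    Tendsto (fun t => |t - s| ^ γ) (𝓝 s) (𝓝 0) := by
  have hcont : Continuous fun t : ℝ => |t - s| ^ γ :=
    (continuous_id.sub continuous_const).abs.rpow_const fun _ => Or.inr hγ.le
  simpa [Real.zero_rpow hγ.ne'] using hcont.tendsto s

lemma ContinuousOn.comp_fst_prod {X Y Z : Type*} [TopologicalSpace X] [TopologicalSpace Y]
    [TopologicalSpace Z] {f : X → Z} {s : Set X} (hf : ContinuousOn f s) (t : Set Y) :
    ContinuousOn (fun p : X × Y => f p.1) (s ×ˢ t) :=
  hf.comp continuousOn_fst fun _ hp => hp.1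

lemma ContinuousOn.comp_snd_prod {X Y Z : Type*} [TopologicalSpace X] [TopologicalSpace Y]
    [TopologicalSpace Z] {f : Y → Z} {t : Set Y} (hf : ContinuousOn f t) (s : Set X) :
    ContinuousOn (fun p : X × Y => f p.2) (s ×ˢ t) :=
  hf.comp continuousOn_snd fun _ hp => hp.2

lemma ContinuousOn.intervalIntegrable_comp_add {h : ℝ → ℝ → ℝ} {p q a b ε : ℝ}
    (hh : ContinuousOn (Function.uncurry h) (Icc p q ×ˢ Icc p q)) (hpa : p ≤ a) (hab : a ≤ b)
    (hε : 0 ≤ ε) (hbq : b + ε ≤ q) : IntervalIntegrable (fun u => h u (u + ε)) volume a b :=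
  (hh.comp (f := fun u => (u, u + ε)) (by fun_prop) fun u hu =>
    ⟨⟨hpa.trans hu.1, by linarith [hu.2]⟩, ⟨by linarith [hu.1], by linarith [hu.2]⟩⟩)
    |>.intervalIntegrable_of_Icc hab

open scoped NNReal in
lemma abs_sub_sub_deriv_mul_le {f : ℝ → ℝ} {s : Set ℝ} {M : ℝ≥0} (hf : Differentiable ℝ f)
    (hs : Convex ℝ s) (hM : LipschitzOnWith M (deriv f) s) {u v w : ℝ} (hu : u ∈ s) (hv : v ∈ s)
    (hw : w ∈ s) : |f w - f v - deriv f u * (w - v)| ≤ M * (|w - v| + |v - u|) * |w - v| := by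
  have hF : ∀ z, HasDerivAt (fun z => f z - deriv f v * z) (deriv f z - deriv f v) z := fun z =>
    ((hf z).hasDerivAt.sub ((hasDerivAt_id' z).const_mul (deriv f v))).congr_deriv (by ring)
  have htaylor : |f w - f v - deriv f v * (w - v)| ≤ M * |w - v| * |w - v| := by
    have := (convex_uIcc v w).norm_image_sub_le_of_norm_deriv_le (C := M * |w - v|)
      (fun z _ => (hF z).differentiableAt) (fun z hz => ?_) left_mem_uIcc right_mem_uIcc
    · rw [Real.norm_eq_abs, Real.norm_eq_abs] at this
      convert this using 2
      ring
    rw [(hF z).deriv, Real.norm_eq_abs, ← Real.dist_eq]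
    exact (hM.dist_le_mul _ (hs.ordConnected.uIcc_subset hv hw hz) _ hv).trans
      (by rw [Real.dist_eq]; exact mul_le_mul_of_nonneg_left (abs_sub_left_of_mem_uIcc hz) M.2)
  have hlip : |deriv f v - deriv f u| ≤ M * |v - u| := by
    simpa [Real.dist_eq] using hM.dist_le_mul _ hv _ hu
  calc |f w - f v - deriv f u * (w - v)|
      = |(f w - f v - deriv f v * (w - v)) + (deriv f v - deriv f u) * (w - v)| := by ring_nf
    _ ≤ M * |w - v| * |w - v| + M * |v - u| * |w - v| := by
      refine (abs_add_le _ _).trans (add_le_add htaylor ?_)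
      rw [abs_mul]; gcongr
    _ = M * (|w - v| + |v - u|) * |w - v| := by ring

noncomputable def uniformSum (g : ℝ → ℝ → ℝ) (N : ℕ) (a b : ℝ) : ℝ :=
  ∑ i ∈ Finset.range N, g (a + i * (b - a) / N) (a + (i + 1) * (b - a) / N)

def HasSewingBound (g : ℝ → ℝ → ℝ) (K β p q : ℝ) : Prop :=
  ∀ a b c, p ≤ a → a ≤ b → b ≤ c → c ≤ q → |g a c - g a b - g b c| ≤ K * (c - a) ^ β

/-- Splitting an interval into two pieces of relative length at most `2/3` contracts
`(b - a) ^ β` by the factor `(2/3) ^ (β - 1)`; this constant solves `K' = K' (2/3) ^ (β - 1) + K`. -/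
noncomputable def sewingConstant (K β : ℝ) : ℝ := K / (1 - (2 / 3 : ℝ) ^ (β - 1))

lemma sewingConstant_nonneg {K β : ℝ} (hK : 0 ≤ K) (hβ : 1 < β) : 0 ≤ sewingConstant K β :=
  div_nonneg hK (sub_nonneg.mpr (Real.rpow_le_one (by norm_num) (by norm_num) (by linarith)))

noncomputable def sewingLimit (g : ℝ → ℝ → ℝ) (a b : ℝ) : ℝ :=
  limUnder atTop fun N => uniformSum g N a b

section UniformSum

variable {g : ℝ → ℝ → ℝ}

@[simp]
lemma uniformSum_one (a b : ℝ) : uniformSum g 1 a b = g a b := by simp [uniformSum]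

lemma uniformSum_add (k m : ℕ) (a b : ℝ) :
    uniformSum g (k + m) a b = uniformSum g k a (a + k * (b - a) / (k + m))
      + uniformSum g m (a + k * (b - a) / (k + m)) b := by
  simp only [uniformSum, Finset.sum_range_add]
  congr 1 <;> refine Finset.sum_congr rfl fun i hi => ?_
  · have hk : (k : ℝ) ≠ 0 := by have := Finset.mem_range.mp hi; norm_cast; omega
    have hkm : (k : ℝ) + m ≠ 0 := by have := Finset.mem_range.mp hi; norm_cast; omega
    push_cast
    congr 1 <;> (field_simp; ring)
  · have hm : (m : ℝ) ≠ 0 := by have := Finset.mem_range.mp hi; norm_cast; omega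
    have hkm : (k : ℝ) + m ≠ 0 := by have := Finset.mem_range.mp hi; norm_cast; omega
    push_cast
    congr 1 <;> (field_simp; ring)

lemma uniformSum_add_of_le {k N : ℕ} (hk : k ≤ N) (a b : ℝ) :
    uniformSum g N a b = uniformSum g k a (a + k * (b - a) / N)
      + uniformSum g (N - k) (a + k * (b - a) / N) b := by
  obtain ⟨m, rfl⟩ := Nat.exists_eq_add_of_le hk
  simpa using uniformSum_add k m a b

lemma uniformSum_mul (N M : ℕ) (a b : ℝ) :
    uniformSum g (N * M) a b = ∑ i ∈ Finset.range N,
      uniformSum g M (a + i * (b - a) / N) (a + (i + 1) * (b - a) / N) := by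
  simp only [uniformSum, Finset.sum_range_mul]
  refine Finset.sum_congr rfl fun i hi => Finset.sum_congr rfl fun j hj => ?_
  have hN : (N : ℝ) ≠ 0 := by have := Finset.mem_range.mp hi; norm_cast; omega
  have hM : (M : ℝ) ≠ 0 := by have := Finset.mem_range.mp hj; norm_cast; omega
  push_cast
  congr 1 <;> (field_simp; ring)

lemma continuousOn_uniformSum {p q : ℝ} (hgc : ContinuousOn (Function.uncurry g) (Icc p q ×ˢ Icc p q))
    (N : ℕ) : ContinuousOn (fun t => uniformSum g N p t) (Icc p q) := by
  refine continuousOn_finsetSum _ fun i hi => hgc.comp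
    (f := fun t => (p + i * (t - p) / N, p + (i + 1) * (t - p) / N)) (by fun_prop) fun t ht => ?_
  have hi := Finset.mem_range.mp hi
  have h1 := add_mul_div_mem_Icc ht.1 hi.le
  have h2 := add_mul_div_mem_Icc ht.1 (Nat.succ_le_of_lt hi)
  push_cast at h2
  exact ⟨⟨h1.1, h1.2.trans ht.2⟩, ⟨h2.1, h2.2.trans ht.2⟩⟩

end UniformSum

namespace HasSewingBound

variable {g : ℝ → ℝ → ℝ} {K β p q : ℝ}

lemma apply_self (hg : HasSewingBound g K β p q) (hβ : 0 < β) {a : ℝ} (hpa : p ≤ a)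
    (haq : a ≤ q) : g a a = 0 := by
  simpa [Real.zero_rpow hβ.ne'] using hg a a a hpa le_rfl le_rfl haq

lemma abs_uniformSum_sub_le (hg : HasSewingBound g K β p q) (hK : 0 ≤ K) (hβ : 1 < β)
    {N : ℕ} (hN : 1 ≤ N) {a b : ℝ} (hpa : p ≤ a) (hab : a ≤ b) (hbq : b ≤ q) :
    |uniformSum g N a b - g a b| ≤ sewingConstant K β * (b - a) ^ β := by
  set K' := sewingConstant K β
  have hθ : (2 / 3 : ℝ) ^ (β - 1) < 1 := Real.rpow_lt_one (by norm_num) (by norm_num) (by linarith)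
  have hK' : K' * (2 / 3 : ℝ) ^ (β - 1) + K = K' := by
    have : 1 - (2 / 3 : ℝ) ^ (β - 1) ≠ 0 := by linarith
    simp only [K', sewingConstant]
    field_simp
    ring
  induction N using Nat.strong_induction_on generalizing a b with
  | _ N ih =>
  rcases hN.eq_or_lt with rfl | hN2
  · simpa using mul_nonneg (sewingConstant_nonneg hK hβ) (Real.rpow_nonneg (sub_nonneg.2 hab) β)
  set k := N / 2
  set c := a + k * (b - a) / N
  have hNpos : (0 : ℝ) < N := by positivity
  have hk : (k : ℝ) ≤ 2 / 3 * N := by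
    have : 3 * k ≤ 2 * N := by omega
    have : (3 * k : ℝ) ≤ 2 * N := by exact_mod_cast this
    linarith
  have hNk : ((N - k : ℕ) : ℝ) ≤ 2 / 3 * N := by
    have : 3 * (N - k) ≤ 2 * N := by omega
    have : (3 * (N - k : ℕ) : ℝ) ≤ 2 * N := by exact_mod_cast this
    linarith
  have hca : c - a = k / N * (b - a) := by ring
  have hbc : b - c = (N - k : ℕ) / N * (b - a) := by
    rw [Nat.cast_sub (by omega)]; simp only [c]; field_simp; ring
  have hac : a ≤ c := by nlinarith [div_nonneg (Nat.cast_nonneg k) hNpos.le]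
  have hcb : c ≤ b := by nlinarith [div_nonneg (Nat.cast_nonneg (N - k)) hNpos.le]
  have hleft := ih k (by omega) (by omega) hpa hac (hcb.trans hbq)
  have hright := ih (N - k) (by omega) (by omega) (hpa.trans hac) hcb hbq
  have hmid := hg a c b hpa hac hcb hbq
  have hpieces : (c - a) ^ β + (b - c) ^ β ≤ (2 / 3 : ℝ) ^ (β - 1) * (b - a) ^ β := by
    have := rpow_add_rpow_le (sub_nonneg.2 hac) (sub_nonneg.2 hcb) (by norm_num : (0 : ℝ) ≤ 2 / 3)
      (by rw [sub_add_sub_cancel', hca]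
          exact mul_le_mul_of_nonneg_right ((div_le_iff₀ hNpos).2 hk) (sub_nonneg.2 hab))
      (by rw [sub_add_sub_cancel', hbc]
          exact mul_le_mul_of_nonneg_right ((div_le_iff₀ hNpos).2 hNk) (sub_nonneg.2 hab)) hβ.le
    rwa [sub_add_sub_cancel'] at this
  rw [uniformSum_add_of_le (Nat.div_le_self N 2)]
  calc |uniformSum g k a c + uniformSum g (N - k) c b - g a b|
      = |(uniformSum g k a c - g a c) + (uniformSum g (N - k) c b - g c b)
          - (g a b - g a c - g c b)| := by ring_nf
    _ ≤ K' * (c - a) ^ β + K' * (b - c) ^ β + K * (b - a) ^ β := by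
      exact (abs_sub _ _).trans
        (add_le_add ((abs_add_le _ _).trans (add_le_add hleft hright)) hmid)
    _ ≤ (K' * (2 / 3 : ℝ) ^ (β - 1) + K) * (b - a) ^ β := by
      nlinarith [sewingConstant_nonneg hK hβ]
    _ = K' * (b - a) ^ β := by rw [hK']

lemma abs_uniformSum_mul_sub_le (hg : HasSewingBound g K β p q) (hK : 0 ≤ K) (hβ : 1 < β)
    {N M : ℕ} (hN : 1 ≤ N) (hM : 1 ≤ M) {a b : ℝ} (hpa : p ≤ a) (hab : a ≤ b) (hbq : b ≤ q) :
    |uniformSum g (N * M) a b - uniformSum g N a b|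
      ≤ sewingConstant K β * (b - a) ^ β * (N : ℝ) ^ (1 - β) := by
  have hNpos : (0 : ℝ) < N := by positivity
  have hterm : ∀ i ∈ Finset.range N,
      |uniformSum g M (a + i * (b - a) / N) (a + (i + 1) * (b - a) / N)
        - g (a + i * (b - a) / N) (a + (i + 1) * (b - a) / N)|
        ≤ sewingConstant K β * ((b - a) / N) ^ β := fun i hi => by
    have hi := Finset.mem_range.mp hi
    have hstep : a + (i + 1) * (b - a) / N - (a + i * (b - a) / N) = (b - a) / N := by ring
    have hlo := add_mul_div_mem_Icc hab hi.le
    have hhi := add_mul_div_mem_Icc hab (Nat.succ_le_of_lt hi)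
    push_cast at hhi
    have hstep_nonneg : 0 ≤ (b - a) / N := div_nonneg (sub_nonneg.2 hab) hNpos.le
    rw [← hstep]
    exact hg.abs_uniformSum_sub_le hK hβ hM (hpa.trans hlo.1) (by linarith) (hhi.2.trans hbq)
  rw [uniformSum_mul, uniformSum, ← Finset.sum_sub_distrib]
  calc _ ≤ ∑ _i ∈ Finset.range N, sewingConstant K β * ((b - a) / N) ^ β :=
        (Finset.abs_sum_le_sum_abs _ _).trans (Finset.sum_le_sum hterm)
    _ = sewingConstant K β * (b - a) ^ β * (N : ℝ) ^ (1 - β) := by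
      rw [Finset.sum_const, Finset.card_range, nsmul_eq_mul, Real.div_rpow (by linarith) hNpos.le,
        Real.rpow_sub hNpos, Real.rpow_one]
      field_simp

lemma cauchySeq_uniformSum (hg : HasSewingBound g K β p q) (hK : 0 ≤ K) (hβ : 1 < β) {a b : ℝ}
    (hpa : p ≤ a) (hab : a ≤ b) (hbq : b ≤ q) : CauchySeq fun N => uniformSum g N a b := by
  set C := sewingConstant K β * (b - a) ^ β
  have hdecay := tendsto_natCast_rpow_atTop_zero (by linarith : 1 - β < 0)
  rw [cauchySeq_iff_tendsto_dist_atTop_0, ← prod_atTop_atTop_eq]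
  refine squeeze_zero' (Eventually.of_forall fun _ => dist_nonneg) ?_
    (by simpa using ((hdecay.comp tendsto_fst).add (hdecay.comp tendsto_snd)).const_mul C)
  filter_upwards [prod_mem_prod (eventually_ge_atTop 1) (eventually_ge_atTop 1)]
    with ⟨n, m⟩ ⟨hn, hm⟩
  have h1 := hg.abs_uniformSum_mul_sub_le hK hβ hn hm hpa hab hbq
  have h2 := hg.abs_uniformSum_mul_sub_le hK hβ hm hn hpa hab hbq
  rw [mul_comm m n] at h2
  rw [Real.dist_eq]
  calc _ ≤ |uniformSum g (n * m) a b - uniformSum g n a b|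
        + |uniformSum g (n * m) a b - uniformSum g m a b| := by
        rw [abs_sub_comm (uniformSum g (n * m) a b)]; exact abs_sub_le _ _ _
    _ ≤ _ := by linarith

lemma tendsto_uniformSum_mul (hg : HasSewingBound g K β p q) (hK : 0 ≤ K) (hβ : 1 < β) {N : ℕ}
    (hN : 1 ≤ N) {a b : ℝ} (hpa : p ≤ a) (hab : a ≤ b) (hbq : b ≤ q) :
    Tendsto (fun M => uniformSum g (N * M) a b) atTop (𝓝 (sewingLimit g a b)) :=
  (hg.cauchySeq_uniformSum hK hβ hpa hab hbq).tendsto_limUnder.comp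
    (tendsto_atTop_mono (fun M => Nat.le_mul_of_pos_left M hN) tendsto_id)

lemma abs_sewingLimit_sub_uniformSum_le (hg : HasSewingBound g K β p q) (hK : 0 ≤ K)
    (hβ : 1 < β) {N : ℕ} (hN : 1 ≤ N) {a b : ℝ} (hpa : p ≤ a) (hab : a ≤ b) (hbq : b ≤ q) :
    |sewingLimit g a b - uniformSum g N a b|
      ≤ sewingConstant K β * (b - a) ^ β * (N : ℝ) ^ (1 - β) :=
  le_of_tendsto (((hg.tendsto_uniformSum_mul hK hβ hN hpa hab hbq).sub_const _).abs)
    ((eventually_ge_atTop 1).mono fun _ hM => hg.abs_uniformSum_mul_sub_le hK hβ hN hM hpa hab hbq)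

lemma abs_sewingLimit_sub_le (hg : HasSewingBound g K β p q) (hK : 0 ≤ K) (hβ : 1 < β)
    {a b : ℝ} (hpa : p ≤ a) (hab : a ≤ b) (hbq : b ≤ q) :
    |sewingLimit g a b - g a b| ≤ sewingConstant K β * (b - a) ^ β := by
  simpa using hg.abs_sewingLimit_sub_uniformSum_le hK hβ le_rfl hpa hab hbq

lemma sewingLimit_self (hg : HasSewingBound g K β p q) (hK : 0 ≤ K) (hβ : 1 < β) {a : ℝ}
    (hpa : p ≤ a) (haq : a ≤ q) : sewingLimit g a a = 0 := by
  simpa [hg.apply_self (by linarith) hpa haq, Real.zero_rpow (by linarith : β ≠ 0)]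
    using hg.abs_sewingLimit_sub_le hK hβ hpa le_rfl haq

lemma sewingLimit_eq_add (hg : HasSewingBound g K β p q) (hK : 0 ≤ K) (hβ : 1 < β) {k N : ℕ}
    (hk : k ≤ N) {a b : ℝ} (hpa : p ≤ a) (hab : a ≤ b) (hbq : b ≤ q) :
    sewingLimit g a b
      = sewingLimit g a (a + k * (b - a) / N) + sewingLimit g (a + k * (b - a) / N) b := by
  set c := a + k * (b - a) / N
  obtain ⟨hac, hcb⟩ := add_mul_div_mem_Icc hab hk
  rcases Nat.eq_zero_or_pos k with rfl | hk0
  · simp [c, hg.sewingLimit_self hK hβ hpa (hab.trans hbq)]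
  rcases hk.eq_or_lt with rfl | hkN
  · have hcb' : c = b := by simp only [c]; field_simp; ring
    rw [hcb', hg.sewingLimit_self hK hβ (hpa.trans hab) hbq, add_zero]
  have hsplit : ∀ M : ℕ, 1 ≤ M →
      uniformSum g (N * M) a b = uniformSum g (k * M) a c + uniformSum g ((N - k) * M) c b := by
    intro M hM
    have hM' : (M : ℝ) ≠ 0 := by positivity
    rw [uniformSum_add_of_le (Nat.mul_le_mul_right M hk), ← Nat.sub_mul]
    simp only [c]
    congr 2 <;> (push_cast; field_simp)
  refine tendsto_nhds_unique (hg.tendsto_uniformSum_mul hK hβ (show 1 ≤ N by omega) hpa hab hbq) ?_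
  refine ((hg.tendsto_uniformSum_mul hK hβ hk0 hpa hac (hcb.trans hbq)).add
    (hg.tendsto_uniformSum_mul hK hβ (show 1 ≤ N - k by omega) (hpa.trans hac) hcb hbq)).congr' ?_
  filter_upwards [eventually_ge_atTop 1] with M hM
  exact (hsplit M hM).symm

lemma continuousOn_sewingLimit (hg : HasSewingBound g K β p q) (hK : 0 ≤ K) (hβ : 1 < β)
    (hgc : ContinuousOn (Function.uncurry g) (Icc p q ×ˢ Icc p q)) :
    ContinuousOn (fun t => sewingLimit g p t) (Icc p q) := by
  set C := sewingConstant K β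
  have hdecay : Tendsto (fun N : ℕ => C * (q - p) ^ β * (N : ℝ) ^ (1 - β)) atTop (𝓝 0) := by
    simpa using (tendsto_natCast_rpow_atTop_zero (by linarith : 1 - β < 0)).const_mul
      (C * (q - p) ^ β)
  have huniform : TendstoUniformlyOn (fun N t => uniformSum g N p t) (fun t => sewingLimit g p t)
      atTop (Icc p q) := by
    rw [Metric.tendstoUniformlyOn_iff]
    intro ε hε
    filter_upwards [hdecay.eventually_lt_const hε, eventually_ge_atTop 1] with N hNε hN t ht
    rw [Real.dist_eq]
    calc _ ≤ C * (t - p) ^ β * (N : ℝ) ^ (1 - β) :=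
          hg.abs_sewingLimit_sub_uniformSum_le hK hβ hN le_rfl ht.1 ht.2
      _ ≤ C * (q - p) ^ β * (N : ℝ) ^ (1 - β) := by
        gcongr
        · exact sewingConstant_nonneg hK hβ
        · linarith [ht.1]
        · exact ht.2
      _ < ε := hNε
  exact huniform.continuousOn (Frequently.of_forall (continuousOn_uniformSum hgc))

lemma abs_sewingLimit_sub_sewingLimit_sub_le (hg : HasSewingBound g K β p q) (hK : 0 ≤ K)
    (hβ : 1 < β) (hgc : ContinuousOn (Function.uncurry g) (Icc p q ×ˢ Icc p q)) {s t : ℝ}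
    (hps : p ≤ s) (hst : s ≤ t) (htq : t ≤ q) :
    |sewingLimit g p t - sewingLimit g p s - g s t| ≤ sewingConstant K β * (t - s) ^ β := by
  -- Additivity of `sewingLimit` is only known at grid points: approximate `s` from below by
  -- grid points `c N` of `[p, t]` and pass to the limit using continuity.
  set r := (s - p) / (t - p)
  have hr0 : 0 ≤ r := div_nonneg (by linarith) (by linarith)
  have hr1 : r ≤ 1 := div_le_one_of_le₀ (by linarith) (by linarith)
  have hs : s = p + r * (t - p) := by
    rcases (sub_nonneg.2 (hps.trans hst)).eq_or_lt with h | h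
    · rw [← h, mul_zero, add_zero]; linarith
    · simp only [r]; field_simp; ring
  set c : ℕ → ℝ := fun N => p + ⌊r * N⌋₊ * (t - p) / N
  have hfloor : ∀ N : ℕ, ⌊r * N⌋₊ ≤ N := fun N =>
    Nat.floor_le_of_le (mul_le_of_le_one_left (Nat.cast_nonneg N) hr1)
  have hcmem : ∀ N, c N ∈ Icc p t := fun N => add_mul_div_mem_Icc (hps.trans hst) (hfloor N)
  have hc : Tendsto c atTop (𝓝[Icc p q] s) := by
    refine tendsto_nhdsWithin_iff.2 ⟨?_, Eventually.of_forall fun N =>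
      ⟨(hcmem N).1, (hcmem N).2.trans htq⟩⟩
    have := ((tendsto_nat_floor_mul_div_atTop hr0).comp tendsto_natCast_atTop_atTop).mul_const
      (t - p) |>.const_add p
    rw [← hs] at this
    refine this.congr fun N => ?_
    simp only [c, Function.comp_apply]
    ring
  have hsq : ∀ u ∈ Icc p q, (u, t) ∈ Icc p q ×ˢ Icc p q := fun u hu => ⟨hu, hps.trans hst, htq⟩
  have hlhs : Tendsto (fun N => |sewingLimit g p t - sewingLimit g p (c N) - g (c N) t|) atTop
      (𝓝 |sewingLimit g p t - sewingLimit g p s - g s t|) := by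
    have hI := (hg.continuousOn_sewingLimit hK hβ hgc s ⟨hps, hst.trans htq⟩).tendsto.comp hc
    have hgt := ((hgc.comp (Continuous.continuousOn (by fun_prop)) hsq) s
      ⟨hps, hst.trans htq⟩).tendsto.comp hc
    exact ((tendsto_const_nhds.sub hI).sub hgt).abs
  have hrhs : Tendsto (fun N => sewingConstant K β * (t - c N) ^ β) atTop
      (𝓝 (sewingConstant K β * (t - s) ^ β)) :=
    ((tendsto_const_nhds.sub (tendsto_nhdsWithin_iff.1 hc).1).rpow_const
      (Or.inr (by linarith))).const_mul _
  refine le_of_tendsto_of_tendsto hlhs hrhs ((eventually_ge_atTop 1).mono fun N hN => ?_)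
  have hadd : sewingLimit g p t = sewingLimit g p (c N) + sewingLimit g (c N) t :=
    hg.sewingLimit_eq_add hK hβ (hfloor N) le_rfl (hps.trans hst) htq
  dsimp only
  rw [hadd, add_sub_cancel_left]
  exact hg.abs_sewingLimit_sub_le hK hβ (hcmem N).1 (hcmem N).2 htq

end HasSewingBound

theorem HasSewingBound.exists_continuous {g : ℝ → ℝ → ℝ} {K β p q : ℝ}
    (hg : HasSewingBound g K β p q) (hK : 0 ≤ K) (hβ : 1 < β) (hpq : p ≤ q)
    (hgc : ContinuousOn (Function.uncurry g) (Icc p q ×ˢ Icc p q)) :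
    ∃ Φ : ℝ → ℝ, Continuous Φ ∧ ∃ K' : ℝ, ∀ s t : ℝ, p ≤ s → s ≤ t → t ≤ q →
      |Φ t - Φ s - g s t| ≤ K' * (t - s) ^ β := by
  refine ⟨fun v => sewingLimit g p (projIcc p q hpq v),
    (hg.continuousOn_sewingLimit hK hβ hgc).comp_continuous (continuous_subtype_val.comp
      continuous_projIcc) fun v => (projIcc p q hpq v).2, sewingConstant K β,
    fun s t hps hst htq => ?_⟩
  simp only [projIcc_of_mem hpq ⟨hps, hst.trans htq⟩, projIcc_of_mem hpq ⟨hps.trans hst, htq⟩]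
  exact hg.abs_sewingLimit_sub_sewingLimit_sub_le hK hβ hgc hps hst htq

theorem tendsto_inv_mul_integral_sub_comp_add {Φ : ℝ → ℝ} (hΦ : Continuous Φ) (a b : ℝ) :
    Tendsto (fun ε => ε⁻¹ * ∫ u in a..b, (Φ (u + ε) - Φ u)) (𝓝[≠] 0) (𝓝 (Φ b - Φ a)) := by
  set G : ℝ → ℝ := fun v => ∫ u in a..v, Φ u
  have hslope : ∀ v, Tendsto (fun ε => ε⁻¹ * (G (v + ε) - G v)) (𝓝[≠] 0) (𝓝 (Φ v)) := fun v =>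
    hasDerivAt_iff_tendsto_slope_zero.1 (hΦ.integral_hasStrictDerivAt a v).hasDerivAt
  refine ((hslope b).sub (hslope a)).congr fun ε => ?_
  have hint : ∀ u v, IntervalIntegrable Φ volume u v := hΦ.intervalIntegrable
  have hshift : IntervalIntegrable (fun u => Φ (u + ε)) volume a b :=
    (hΦ.comp (continuous_add_const ε)).intervalIntegrable a b
  rw [intervalIntegral.integral_sub hshift (hint a b), intervalIntegral.integral_comp_add_right Φ ε,
    ← intervalIntegral.integral_interval_sub_left (hint a (b + ε)) (hint a (a + ε))]
  simp only [G, intervalIntegral.integral_same]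
  ring

theorem tendsto_inv_mul_integral_of_sewing {Φ : ℝ → ℝ} {g : ℝ → ℝ → ℝ} {K β a b c : ℝ}
    (hΦ : Continuous Φ) (hβ : 1 < β) (hab : a ≤ b) (hbc : b < c)
    (hΦg : ∀ s t, a ≤ s → s ≤ t → t ≤ c → |Φ t - Φ s - g s t| ≤ K * (t - s) ^ β)
    (hint : ∀ᶠ ε in 𝓝[>] 0, IntervalIntegrable (fun u => g u (u + ε)) volume a b) :
    Tendsto (fun ε => ε⁻¹ * ∫ u in a..b, g u (u + ε)) (𝓝[>] 0) (𝓝 (Φ b - Φ a)) := by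
  set R : ℝ → ℝ := fun ε => ∫ u in a..b, (Φ (u + ε) - Φ u - g u (u + ε))
  have hsmall : ∀ᶠ ε in 𝓝[>] (0 : ℝ), ε ∈ Ioo 0 (c - b) :=
    Ioo_mem_nhdsGT (by linarith)
  have hR : Tendsto (fun ε => ε⁻¹ * R ε) (𝓝[>] 0) (𝓝 0) := by
    have hpow : Tendsto (fun ε : ℝ => K * (b - a) * ε ^ (β - 1)) (𝓝[>] 0) (𝓝 0) := by
      simpa [Real.zero_rpow (by linarith : β - 1 ≠ 0)] using
        ((continuous_id.rpow_const fun _ => Or.inr (by linarith : 0 ≤ β - 1)).tendsto'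
          0 _ rfl |>.mono_left nhdsWithin_le_nhds).const_mul (K * (b - a))
    refine squeeze_zero_norm' ?_ hpow
    filter_upwards [hsmall] with ε ⟨hε0, hεc⟩
    have hRε : ‖R ε‖ ≤ K * ε ^ β * |b - a| :=
      intervalIntegral.norm_integral_le_of_norm_le_const fun u hu => by
        rw [uIoc_of_le hab] at hu
        simpa using hΦg u (u + ε) hu.1.le (by linarith) (by linarith [hu.2])
    rw [norm_mul, norm_inv, Real.norm_of_nonneg hε0.le, abs_of_nonneg (sub_nonneg.2 hab)] at *
    calc ε⁻¹ * ‖R ε‖ ≤ ε⁻¹ * (K * ε ^ β * (b - a)) := by gcongr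
      _ = K * (b - a) * ε ^ (β - 1) := by
        rw [Real.rpow_sub_one hε0.ne']; field_simp
  have hlim := ((tendsto_inv_mul_integral_sub_comp_add hΦ a b).mono_left
    (nhdsWithin_mono _ fun ε hε => ne_of_gt hε)).sub hR
  rw [sub_zero] at hlim
  refine hlim.congr' ?_
  filter_upwards [hsmall, hint] with ε ⟨hε0, hεc⟩ hgε
  have hΦε : IntervalIntegrable (fun u => Φ (u + ε) - Φ u) volume a b :=
    ((hΦ.comp (continuous_add_const ε)).sub hΦ).intervalIntegrable a b
  simp only [R]
  rw [intervalIntegral.integral_sub hΦε hgε]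
  ring_nf

lemma HolderOnIcc.continuousOn {α a b : ℝ} {z : ℝ → ℝ} (hz : HolderOnIcc α a b z) (hα : 0 < α) :
    ContinuousOn z (Icc a b) := by
  obtain ⟨L, -, hL⟩ := hz
  intro s hs
  rw [ContinuousWithinAt, tendsto_iff_norm_sub_tendsto_zero]
  refine squeeze_zero_norm' ?_ (by simpa using
    ((tendsto_abs_sub_rpow_nhds_zero hα s).const_mul L).mono_left nhdsWithin_le_nhds)
  filter_upwards [self_mem_nhdsWithin] with t ht
  simpa using hL s hs t ht

lemma abs_sub_le_of_holder {z : ℝ → ℝ} {L α p q : ℝ} (hL : 0 ≤ L) (hα : 0 ≤ α)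
    (hz : ∀ s ∈ Icc p q, ∀ t ∈ Icc p q, |z t - z s| ≤ L * |t - s| ^ α) {a c u v : ℝ}
    (hpa : p ≤ a) (hcq : c ≤ q) (hu : u ∈ Icc a c) (hv : v ∈ Icc a c) :
    |z v - z u| ≤ L * (c - a) ^ α := by
  refine (hz u ⟨hpa.trans hu.1, hu.2.trans hcq⟩ v ⟨hpa.trans hv.1, hv.2.trans hcq⟩).trans ?_
  gcongr
  rw [abs_sub_le_iff]
  constructor <;> linarith [hu.1, hu.2, hv.1, hv.2]

namespace IsLevyArea0

variable {α : ℝ} {x y : ℝ → ℝ} {A : ℝ → ℝ → ℝ}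

lemma apply_self (hA : IsLevyArea0 α x y A) {s : ℝ} (hs : s ∈ Icc (0 : ℝ) 2) : A s s = 0 := by
  have := hA.1 s hs s hs s hs
  ring_nf at this
  linarith

lemma apply_swap (hA : IsLevyArea0 α x y A) {s t : ℝ} (hs : s ∈ Icc (0 : ℝ) 2)
    (ht : t ∈ Icc (0 : ℝ) 2) : A t s = -A s t := by
  have := hA.1 s hs s hs t ht
  rw [hA.apply_self hs] at this
  ring_nf at this
  linarith

lemma apply_eq_add (hA : IsLevyArea0 α x y A) {r m t : ℝ} (hr : r ∈ Icc (0 : ℝ) 2)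
    (hm : m ∈ Icc (0 : ℝ) 2) (ht : t ∈ Icc (0 : ℝ) 2) :
    A r t = A r m + A m t + 1 / 2 * ((y t - y m) * (x r - x m) - (y r - y m) * (x t - x m)) := by
  have := hA.1 r hr m hm t ht
  rw [hA.apply_swap hr ht] at this
  linarith

lemma continuousOn (hA : IsLevyArea0 α x y A) (hα : 0 < α) (hx : ContinuousOn x (Icc 0 2))
    (hy : ContinuousOn y (Icc 0 2)) :
    ContinuousOn (Function.uncurry A) (Icc (0 : ℝ) 2 ×ˢ Icc (0 : ℝ) 2) := by
  have h0 : (0 : ℝ) ∈ Icc (0 : ℝ) 2 := ⟨le_rfl, zero_le_two⟩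
  -- Chen's relation through the vertex `0` gives `A s t = A 0 t - A 0 s + (area term)`, so it
  -- suffices that `A 0` is continuous.
  have ha : ContinuousOn (A 0) (Icc 0 2) := by
    intro s hs
    obtain ⟨C, -, hC⟩ := hA.2
    have hAs : Tendsto (A s) (𝓝[Icc 0 2] s) (𝓝 0) := by
      refine squeeze_zero_norm' ?_ (by simpa using ((tendsto_abs_sub_rpow_nhds_zero
        (by positivity : 0 < 2 * α) s).const_mul C).mono_left nhdsWithin_le_nhds)
      filter_upwards [self_mem_nhdsWithin] with t ht
      exact hC s hs t ht
    have harea : ContinuousWithinAt (fun t => (y t - y s) * (x 0 - x s) - (y 0 - y s) * (x t - x s))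
        (Icc 0 2) s := by
      have := hx s hs
      have := hy s hs
      fun_prop
    have hlim := ((tendsto_const_nhds (x := A 0 s)).add hAs).add (harea.tendsto.const_mul (1 / 2))
    simp only [sub_self, zero_mul, mul_zero, add_zero] at hlim
    refine hlim.congr' ?_
    filter_upwards [self_mem_nhdsWithin] with t ht
    exact (hA.apply_eq_add h0 hs ht).symm
  refine ContinuousOn.congr (f := fun p : ℝ × ℝ => A 0 p.2 - A 0 p.1
      + 1 / 2 * ((y p.2 - y 0) * (x p.1 - x 0) - (y p.1 - y 0) * (x p.2 - x 0))) ?_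
    fun p hp => ?_
  · exact ((ha.comp_snd_prod _).sub (ha.comp_fst_prod _)).add (continuousOn_const.mul
      ((((hy.comp_snd_prod _).sub continuousOn_const).mul
        ((hx.comp_fst_prod _).sub continuousOn_const)).sub
      (((hy.comp_fst_prod _).sub continuousOn_const).mul
        ((hx.comp_snd_prod _).sub continuousOn_const))))
  · show A p.1 p.2 = _
    rw [hA.apply_eq_add hp.1 h0 hp.2, hA.apply_swap h0 hp.1]
    ring

end IsLevyArea0

noncomputable def correctedGerm (x y : ℝ → ℝ) (A : ℝ → ℝ → ℝ) (f : ℝ → ℝ) (s t : ℝ) : ℝ :=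
  (f (y s) + f (y t)) / 2 * (x t - x s) + deriv f (y s) * A s t

lemma correctedGerm_sub_sub {x y : ℝ → ℝ} {A : ℝ → ℝ → ℝ} {f : ℝ → ℝ} {a b c : ℝ}
    (hA : A a c = A a b + A b c + 1 / 2 * ((y c - y b) * (x a - x b) - (y a - y b) * (x c - x b))) :
    correctedGerm x y A f a c - correctedGerm x y A f a b - correctedGerm x y A f b c
      = (x b - x a) / 2 * (f (y c) - f (y b) - deriv f (y a) * (y c - y b))
        + (x c - x b) / 2 * (f (y a) - f (y b) - deriv f (y a) * (y a - y b))
        + (deriv f (y a) - deriv f (y b)) * A b c := by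
  simp only [correctedGerm]
  rw [hA]
  ring

theorem hasSewingBound_correctedGerm {α : ℝ} (hα : 0 < α) {x y : ℝ → ℝ} {A : ℝ → ℝ → ℝ}
    {f : ℝ → ℝ} (hx : HolderOnIcc α 0 2 x) (hy : HolderOnIcc α 0 2 y) (hA : IsLevyArea0 α x y A)
    (hf : ContDiff ℝ 2 f) : ∃ K, 0 ≤ K ∧ HasSewingBound (correctedGerm x y A f) K (3 * α) 0 2 := by
  obtain ⟨R, hR⟩ := (isCompact_Icc.image_of_continuousOn (hy.continuousOn hα)).isBounded
    |>.subset_closedBall 0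
  obtain ⟨M, hM⟩ := (ContDiff.iterate_deriv' 1 1 hf).contDiffOn.exists_lipschitzOnWith
    one_ne_zero (convex_closedBall 0 R) (isCompact_closedBall 0 R)
  obtain ⟨Lx, hLx, hxL⟩ := hx
  obtain ⟨Ly, hLy, hyL⟩ := hy
  obtain ⟨C, hC, hAC⟩ := hA.2
  refine ⟨M * Ly * (2 * Lx * Ly + C), by positivity, fun a b c ha hab hbc hc => ?_⟩
  rw [Function.iterate_one] at hM
  set P := (c - a) ^ α
  have hP : 0 ≤ P := Real.rpow_nonneg (by linarith) α
  have hmem : ∀ u ∈ Icc a c, u ∈ Icc (0 : ℝ) 2 := fun u hu => ⟨ha.trans hu.1, hu.2.trans hc⟩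
  have ma : a ∈ Icc a c := ⟨le_rfl, hab.trans hbc⟩
  have mb : b ∈ Icc a c := ⟨hab, hbc⟩
  have mc : c ∈ Icc a c := ⟨hab.trans hbc, le_rfl⟩
  have hxinc : ∀ u ∈ Icc a c, ∀ v ∈ Icc a c, |x v - x u| ≤ Lx * P := fun u hu v hv =>
    abs_sub_le_of_holder hLx.le hα.le hxL ha hc hu hv
  have hyinc : ∀ u ∈ Icc a c, ∀ v ∈ Icc a c, |y v - y u| ≤ Ly * P := fun u hu v hv =>
    abs_sub_le_of_holder hLy.le hα.le hyL ha hc hu hv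
  have hyR : ∀ u ∈ Icc a c, y u ∈ Metric.closedBall 0 R := fun u hu =>
    hR (mem_image_of_mem y (hmem u hu))
  have hT : ∀ u ∈ Icc a c, ∀ v ∈ Icc a c, ∀ w ∈ Icc a c,
      |f (y w) - f (y v) - deriv f (y u) * (y w - y v)| ≤ M * (2 * (Ly * P)) * (Ly * P) :=
    fun u hu v hv w hw => (abs_sub_sub_deriv_mul_le (hf.differentiable two_ne_zero)
      (convex_closedBall 0 R) hM (hyR u hu) (hyR v hv) (hyR w hw)).trans
      (mul_le_mul (mul_le_mul_of_nonneg_left (by linarith [hyinc v hv w hw, hyinc u hu v hv]) M.2)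
        (hyinc v hv w hw) (abs_nonneg _) (by positivity))
  have hf' : |deriv f (y a) - deriv f (y b)| ≤ M * (Ly * P) := by
    rw [← Real.dist_eq]
    exact (hM.dist_le_mul _ (hyR a ma) _ (hyR b mb)).trans
      (by rw [Real.dist_eq]; gcongr; exact hyinc b mb a ma)
  have hAbc : |A b c| ≤ C * P ^ 2 := by
    refine (hAC b (hmem b mb) c (hmem c mc)).trans ?_
    have hP2 : (c - a) ^ (2 * α) = P ^ 2 := by
      rw [← Real.rpow_mul_natCast (by linarith)]; norm_num [mul_comm]
    rw [← hP2]
    gcongr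
    rw [abs_of_nonneg (by linarith)]
    linarith
  have hP3 : (c - a) ^ (3 * α) = P ^ 3 := by
    rw [← Real.rpow_mul_natCast (by linarith)]; norm_num [mul_comm]
  rw [correctedGerm_sub_sub (hA.apply_eq_add (hmem a ma) (hmem b mb) (hmem c mc)), hP3]
  refine (abs_add_le _ _).trans ((add_le_add_left (abs_add_le _ _) _).trans ?_)
  simp only [abs_mul, abs_div, abs_two]
  calc _ ≤ Lx * P / 2 * (M * (2 * (Ly * P)) * (Ly * P))
          + Lx * P / 2 * (M * (2 * (Ly * P)) * (Ly * P)) + M * (Ly * P) * (C * P ^ 2) := by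
        gcongr
        exacts [hxinc a ma b mb, hT a ma b mb c mc, hxinc b mb c mc, hT a ma b mb a ma]
    _ = M * Ly * (2 * Lx * Ly + C) * P ^ 3 := by ring

lemma Ieps_eq_inv_mul_integral_correctedGerm {x y : ℝ → ℝ} {A : ℝ → ℝ → ℝ} {f : ℝ → ℝ}
    {p q a b ε : ℝ}
    (hsym : ContinuousOn (Function.uncurry fun s t => (f (y s) + f (y t)) / 2 * (x t - x s))
      (Icc p q ×ˢ Icc p q))
    (harea : ContinuousOn (Function.uncurry fun s t => deriv f (y s) * A s t) (Icc p q ×ˢ Icc p q))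
    (hpa : p ≤ a) (hab : a ≤ b) (hε : 0 ≤ ε) (hbq : b + ε ≤ q) :
    Ieps x y A f a b ε = ε⁻¹ * ∫ u in a..b, correctedGerm x y A f u (u + ε) := by
  rw [Ieps, ← mul_add, ← intervalIntegral.integral_add
    (hsym.intervalIntegrable_comp_add hpa hab hε hbq)
    (harea.intervalIntegrable_comp_add hpa hab hε hbq)]
  rfl

theorem stmt_0 (α : ℝ) (hα : α ∈ Set.Ioo (1/3 : ℝ) 1)
    (x y : ℝ → ℝ) (hx : HolderOnIcc α 0 2 x) (hy : HolderOnIcc α 0 2 y)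
    (A : ℝ → ℝ → ℝ) (hA : IsLevyArea0 α x y A)
    (f : ℝ → ℝ) (hf : ContDiff ℝ 2 f) :
    ∃ I : ℝ, Filter.Tendsto (fun ε => Ieps x y A f 0 1 ε)
      (nhdsWithin 0 (Set.Ioi 0)) (nhds I) := by
  have hα₀ : 0 < α := by linarith [hα.1]
  have hβ : 1 < 3 * α := by linarith [hα.1]
  have hxc := hx.continuousOn hα₀
  have hyc := hy.continuousOn hα₀
  have hsym : ContinuousOn (Function.uncurry fun s t => (f (y s) + f (y t)) / 2 * (x t - x s))
      (Icc (0 : ℝ) 2 ×ˢ Icc (0 : ℝ) 2) :=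
    ((hf.continuous.comp_continuousOn (hyc.comp_fst_prod _)).add
      (hf.continuous.comp_continuousOn (hyc.comp_snd_prod _))).div_const 2 |>.mul
      ((hxc.comp_snd_prod _).sub (hxc.comp_fst_prod _))
  have harea : ContinuousOn (Function.uncurry fun s t => deriv f (y s) * A s t)
      (Icc (0 : ℝ) 2 ×ˢ Icc (0 : ℝ) 2) :=
    ((hf.continuous_deriv one_le_two).comp_continuousOn (hyc.comp_fst_prod _)).mul
      (hA.continuousOn hα₀ hxc hyc)
  have hgerm : ContinuousOn (Function.uncurry (correctedGerm x y A f))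
      (Icc (0 : ℝ) 2 ×ˢ Icc (0 : ℝ) 2) := hsym.add harea
  obtain ⟨K, hK, hδ⟩ := hasSewingBound_correctedGerm hα₀ hx hy hA hf
  obtain ⟨Φ, hΦ, K', hΦg⟩ := hδ.exists_continuous hK hβ zero_le_two hgerm
  have hsmall : ∀ᶠ ε in 𝓝[>] (0 : ℝ), ε ∈ Ioo 0 1 := Ioo_mem_nhdsGT one_pos
  refine ⟨Φ 1 - Φ 0, (tendsto_inv_mul_integral_of_sewing hΦ hβ zero_le_one one_lt_two hΦg
    (hsmall.mono fun ε hε => ?_)).congr' (hsmall.mono fun ε hε => ?_)⟩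
  · exact hgerm.intervalIntegrable_comp_add le_rfl zero_le_one hε.1.le (by linarith [hε.2])
  · exact (Ieps_eq_inv_mul_integral_correctedGerm hsym harea le_rfl zero_le_one hε.1.le
      (by linarith [hε.2])).symm
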